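/- arXiv:math/9902118 — 2 statements merged into one kernel-verified Lean document; each statement's English description precedes it below -/
import Mathlib

section
/- Let V ⊆ H⁰(ℙ¹, O(2)) be a base point free linear system of quadrics on ℙ¹ (i.e., degree-2 forms in two variables with no common zero). If the Koszul (trivial) relations among a generating set of V are generated by linear syzygies, then V is the complete linear system of quadrics, i.e., dim V = 3. -/
/-!
STATEMENT 0: A base point free linear system `V ⊆ H⁰(ℙ¹, O(2))` of quadrics on `ℙ¹`
(degree-2 forms in two variables with no common nontrivial zero), generated by forms
`F₀, …, F_{m-1}`, whose Koszul (trivial) relations are generated by linear syzygies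
(condition `(K₂)`), is the complete system of quadrics, i.e. `dim V = 3`; equivalently,
every degree-2 form lies in the `ℂ`-span of the `F i`.
-/

open MvPolynomial

/-- The set of linear syzygies among the forms `F i`: vectors of degree-1 homogeneous
polynomials `a` with `∑ aᵢ Fᵢ = 0`. -/
def LinearSyzygies {m n : ℕ} (F : Fin m → MvPolynomial (Fin n) ℂ) :
    Set (Fin m → MvPolynomial (Fin n) ℂ) :=
  {a | (∀ i, (a i).IsHomogeneous 1) ∧ ∑ i, a i * F i = 0}

/-- Condition `(K_d)`: the trivial (Koszul) relations `Fᵢ·Fⱼ - Fⱼ·Fᵢ = 0`, i.e. the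
syzygies `eᵢ Fⱼ - eⱼ Fᵢ`, lie in the module generated by the linear syzygies. -/
def SatisfiesK {m n : ℕ} (F : Fin m → MvPolynomial (Fin n) ℂ) : Prop :=
  ∀ i j : Fin m,
    (Pi.single i (F j) - Pi.single j (F i)) ∈
      Submodule.span (MvPolynomial (Fin n) ℂ) (LinearSyzygies F)

/-!
Write a linear syzygy as `aₖ = αₖ x + βₖ y`. Then `A = ∑ αₖ Fₖ` and `B = ∑ βₖ Fₖ` lie in `V` and
`x A + y B = 0`, so `A = y L` and `B = -x L` for a linear form `L`. If some `L ≠ 0`, then `x L`,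
`y L` and a form of `V` not vanishing at the zero of `L` (base point freeness) are linearly
independent, hence span the three-dimensional space of quadrics. Otherwise `b ↦ ∑ Fₖ(z) bₖ` kills
every linear syzygy, so by `(K₂)` it kills the Koszul syzygies: `Fᵢ(z) Fⱼ = Fⱼ(z) Fᵢ`. Then all `Fᵢ`
are proportional and share a zero, contradicting base point freeness.
-/

namespace MvPolynomial

variable {R K σ : Type*} [CommSemiring R] [Field K]

theorem IsHomogeneous.mem_span_X_pow_mul_X_pow {P : MvPolynomial (Fin 2) R} {n : ℕ}
    (hP : P.IsHomogeneous n) :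
    P ∈ Submodule.span R (Set.range fun i : Fin (n + 1) =>
      (X 0 ^ (i : ℕ) * X 1 ^ (n - i) : MvPolynomial (Fin 2) R)) := by
  rw [P.as_sum]
  refine Submodule.sum_mem _ fun d hd => ?_
  have hdeg : d 0 + d 1 = n := by
    have := hP (mem_support_iff.mp hd)
    simpa [Finsupp.weight_apply, Finsupp.sum_fintype, Fin.sum_univ_two] using this
  have hmon : monomial d (coeff d P) = coeff d P • (X 0 ^ d 0 * X 1 ^ d 1) := by
    rw [smul_eq_C_mul, monomial_eq, Finsupp.prod_fintype _ _ (by simp), Fin.prod_univ_two]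
  rw [hmon]
  exact Submodule.smul_mem _ _
    (Submodule.subset_span ⟨⟨d 0, by omega⟩, by simp [show n - d 0 = d 1 by omega]⟩)

theorem IsHomogeneous.exists_eval_eq_zero [IsAlgClosed K] {P : MvPolynomial (Fin 2) K} {n : ℕ}
    (hP : P.IsHomogeneous n) (hn : n ≠ 0) :
    ∃ z ≠ 0, eval z P = 0 := by
  obtain ⟨c, rfl⟩ := (Submodule.mem_span_range_iff_exists_fun K).mp hP.mem_span_X_pow_mul_X_pow
  by_cases hc : c (Fin.last n) = 0
  · refine ⟨![1, 0], by simp, ?_⟩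
    simp [Fin.sum_univ_castSucc, hc, Nat.sub_ne_zero_of_lt]
  · have hf : (∑ i : Fin (n + 1), Polynomial.C (c i) * Polynomial.X ^ (i : ℕ)).degree =
        (n : WithBot ℕ) := by
      rw [Fin.sum_univ_castSucc, Polynomial.degree_add_eq_right_of_degree_lt] <;>
        rw [Fin.val_last, Polynomial.degree_C_mul_X_pow n hc]
      exact Polynomial.degree_sum_fin_lt _
    obtain ⟨t, ht⟩ := IsAlgClosed.exists_root _ (by rw [hf]; exact_mod_cast hn)
    refine ⟨![t, 1], by simp, ?_⟩
    simpa [Polynomial.eval_finsetSum] using ht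

theorem IsHomogeneous.eq_sum_coeff_smul_X [Fintype σ] {P : MvPolynomial σ R}
    (hP : P.IsHomogeneous 1) :
    P = ∑ i, coeff (Finsupp.single i 1) P • X i := by
  classical
  rw [← mem_homogeneousSubmodule, homogeneousSubmodule_one_eq_span_X,
    Submodule.mem_span_range_iff_exists_fun] at hP
  obtain ⟨c, rfl⟩ := hP
  simp [coeff_sum, coeff_X, Finsupp.single_left_inj one_ne_zero]

theorem IsHomogeneous.of_X_mul {P : MvPolynomial σ R} {i : σ} {n : ℕ}
    (h : (X i * P).IsHomogeneous (n + 1)) : P.IsHomogeneous n := by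
  intro d hd
  have := h (d := Finsupp.single i 1 + d) (by rwa [coeff_X_mul])
  simp only [map_add, Finsupp.weight_single, Pi.one_apply, smul_eq_mul, mul_one] at this
  omega

theorem exists_eq_X_mul_of_X_mul_add_X_mul_eq_zero {R : Type*} [CommRing R] [IsDomain R]
    {i j : σ} (hij : i ≠ j) {A B : MvPolynomial σ R} (h : X i * A + X j * B = 0) :
    ∃ L, A = X j * L ∧ B = -(X i * L) := by
  have hdvd : X j ∣ X i * A := ⟨-B, by linear_combination h⟩
  obtain ⟨L, rfl⟩ := (X_prime.dvd_or_dvd hdvd).resolve_left (by simpa [X_dvd_X] using hij.symm)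
  refine ⟨L, rfl, ?_⟩
  have : X j * (B + X i * L) = 0 := by linear_combination h
  linear_combination (mul_eq_zero.mp this).resolve_left (X_ne_zero j)

theorem finrank_homogeneousSubmodule_fin_two_le (n : ℕ) :
    Module.finrank K (homogeneousSubmodule (Fin 2) K n) ≤ n + 1 := by
  have := Module.Finite.span_of_finite K (Set.finite_range fun i : Fin (n + 1) =>
    (X 0 ^ (i : ℕ) * X 1 ^ (n - i) : MvPolynomial (Fin 2) K))
  calc Module.finrank K (homogeneousSubmodule (Fin 2) K n)
      ≤ Module.finrank K (Submodule.span K (Set.range fun i : Fin (n + 1) =>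
          (X 0 ^ (i : ℕ) * X 1 ^ (n - i) : MvPolynomial (Fin 2) K))) :=
        Submodule.finrank_mono fun _ hP => IsHomogeneous.mem_span_X_pow_mul_X_pow hP
    _ ≤ n + 1 := (finrank_range_le_card _).trans_eq (Fintype.card_fin _)

theorem linearIndependent_X_mul_X_mul {L F : MvPolynomial (Fin 2) K} {z : Fin 2 → K}
    (hL : L ≠ 0) (hLz : eval z L = 0) (hFz : eval z F ≠ 0) :
    LinearIndependent K ![X 0 * L, X 1 * L, F] := by
  rw [Fintype.linearIndependent_iff]
  intro c hc
  simp only [Fin.sum_univ_three, Matrix.cons_val_zero, Matrix.cons_val_one, Matrix.cons_val_two,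
    Matrix.head_cons, Matrix.tail_cons] at hc
  have hc2 : c 2 = 0 := by
    simpa [hLz, hFz] using congrArg (eval z) hc
  rw [hc2, zero_smul, add_zero, smul_eq_C_mul, smul_eq_C_mul, ← mul_assoc, ← mul_assoc,
    ← add_mul] at hc
  have hlin := (mul_eq_zero.mp hc).resolve_right hL
  have hc0 : c 0 = 0 := by simpa using congrArg (eval ![1, 0]) hlin
  have hc1 : c 1 = 0 := by simpa using congrArg (eval ![0, 1]) hlin
  intro i; fin_cases i <;> assumption

theorem span_X_mul_X_mul_eq_homogeneousSubmodule {L F : MvPolynomial (Fin 2) K} {z : Fin 2 → K}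
    (hL : L.IsHomogeneous 1) (hL0 : L ≠ 0) (hF : F.IsHomogeneous 2) (hLz : eval z L = 0)
    (hFz : eval z F ≠ 0) :
    Submodule.span K (Set.range ![X 0 * L, X 1 * L, F]) = homogeneousSubmodule (Fin 2) K 2 := by
  have : FiniteDimensional K (homogeneousSubmodule (Fin 2) K 2) :=
    Module.Finite.iff_fg.mpr (homogeneousSubmodule_fg _ _ _)
  refine Submodule.eq_of_le_of_finrank_le ?_ ?_
  · rw [Submodule.span_le]
    rintro _ ⟨i, rfl⟩
    fin_cases i
    · exact (isHomogeneous_X K 0).mul hL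
    · exact (isHomogeneous_X K 1).mul hL
    · exact hF
  · rw [finrank_span_eq_card (linearIndependent_X_mul_X_mul hL0 hLz hFz), Fintype.card_fin]
    exact finrank_homogeneousSubmodule_fin_two_le 2

end MvPolynomial

section LinearSyzygies

variable {m n : ℕ} {F a : Fin m → MvPolynomial (Fin n) ℂ}

noncomputable def syzygyComponent (F a : Fin m → MvPolynomial (Fin n) ℂ) (i : Fin n) :
    MvPolynomial (Fin n) ℂ :=
  ∑ k, coeff (Finsupp.single i 1) (a k) • F k

theorem syzygyComponent_mem_span (F a : Fin m → MvPolynomial (Fin n) ℂ) (i : Fin n) :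
    syzygyComponent F a i ∈ Submodule.span ℂ (Set.range F) :=
  Submodule.sum_mem _ fun k _ => Submodule.smul_mem _ _ (Submodule.subset_span ⟨k, rfl⟩)

theorem isHomogeneous_syzygyComponent {d : ℕ} (hF : ∀ k, (F k).IsHomogeneous d) (i : Fin n) :
    (syzygyComponent F a i).IsHomogeneous d :=
  Submodule.sum_mem (homogeneousSubmodule _ ℂ d) fun k _ => Submodule.smul_mem _ _ (hF k)

theorem sum_X_mul_syzygyComponent (ha : a ∈ LinearSyzygies F) :
    ∑ i, X i * syzygyComponent F a i = 0 := by
  calc ∑ i, X i * syzygyComponent F a i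
      = ∑ k, (∑ i, coeff (Finsupp.single i 1) (a k) • X i) * F k := by
        simp only [syzygyComponent, Finset.mul_sum, Finset.sum_mul, mul_smul_comm, smul_mul_assoc]
        exact Finset.sum_comm
    _ = ∑ k, a k * F k :=
        Finset.sum_congr rfl fun k _ => by rw [← (ha.1 k).eq_sum_coeff_smul_X]
    _ = 0 := ha.2

theorem eval_smul_comm_of_satisfiesK (hK : SatisfiesK F)
    (hsyz : ∀ a ∈ LinearSyzygies F, ∀ i, syzygyComponent F a i = 0) (z : Fin n → ℂ)
    (i j : Fin m) : eval z (F i) • F j = eval z (F j) • F i := by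
  classical
  -- Pairing with the values `F k (z)` kills every linear syzygy, hence every Koszul syzygy.
  let Λ := Fintype.linearCombination (MvPolynomial (Fin n) ℂ) fun k =>
    (C (eval z (F k)) : MvPolynomial (Fin n) ℂ)
  have hker : Submodule.span _ (LinearSyzygies F) ≤ LinearMap.ker Λ := by
    rw [Submodule.span_le]
    intro a ha
    calc Λ a = ∑ l, eval z (syzygyComponent F a l) • X l := by
          simp only [Λ, Fintype.linearCombination_apply, syzygyComponent, map_sum, smul_eval,
            Finset.sum_smul, smul_eq_mul]
          conv_lhs => enter [2, k]; rw [(ha.1 k).eq_sum_coeff_smul_X]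
          simp only [Finset.sum_mul]
          rw [Finset.sum_comm]
          refine Finset.sum_congr rfl fun l _ => Finset.sum_congr rfl fun k _ => ?_
          rw [smul_eq_C_mul, smul_eq_C_mul, C_mul]
          ring
      _ = 0 := by simp [hsyz a ha]
  have := hker (hK i j)
  simp only [LinearMap.mem_ker, map_sub, Fintype.linearCombination_apply_single, smul_eq_mul,
    sub_eq_zero, Λ] at this
  rw [smul_eq_C_mul, smul_eq_C_mul, mul_comm, this, mul_comm]

end LinearSyzygies

section BinaryQuadrics

variable {m : ℕ} {F : Fin m → MvPolynomial (Fin 2) ℂ}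

theorem homogeneousSubmodule_two_le_span_of_syzygyComponent_ne_zero
    (hdeg : ∀ i, (F i).IsHomogeneous 2)
    (hbpf : ∀ z : Fin 2 → ℂ, z ≠ 0 → ∃ i, eval z (F i) ≠ 0)
    {a : Fin m → MvPolynomial (Fin 2) ℂ} (ha : a ∈ LinearSyzygies F)
    (hA : syzygyComponent F a 0 ≠ 0) :
    homogeneousSubmodule (Fin 2) ℂ 2 ≤ Submodule.span ℂ (Set.range F) := by
  have hsum := sum_X_mul_syzygyComponent ha
  rw [Fin.sum_univ_two] at hsum
  obtain ⟨L, hAL, hBL⟩ := exists_eq_X_mul_of_X_mul_add_X_mul_eq_zero (by decide) hsum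
  have hL : L.IsHomogeneous 1 :=
    IsHomogeneous.of_X_mul (i := 1) (hAL ▸ isHomogeneous_syzygyComponent hdeg 0)
  have hL0 : L ≠ 0 := by
    rintro rfl
    exact hA (by simpa using hAL)
  obtain ⟨z, hz, hLz⟩ := hL.exists_eval_eq_zero one_ne_zero
  obtain ⟨k, hk⟩ := hbpf z hz
  rw [← span_X_mul_X_mul_eq_homogeneousSubmodule hL hL0 (hdeg k) hLz hk, Submodule.span_le]
  rintro _ ⟨i, rfl⟩
  fin_cases i
  · simpa [← neg_eq_iff_eq_neg.mpr hBL] using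
      Submodule.neg_mem _ (syzygyComponent_mem_span F a 1)
  · simpa [← hAL] using syzygyComponent_mem_span F a 0
  · exact Submodule.subset_span ⟨k, rfl⟩

theorem exists_syzygyComponent_ne_zero (hdeg : ∀ i, (F i).IsHomogeneous 2)
    (hbpf : ∀ z : Fin 2 → ℂ, z ≠ 0 → ∃ i, eval z (F i) ≠ 0) (hK : SatisfiesK F) :
    ∃ a ∈ LinearSyzygies F, syzygyComponent F a 0 ≠ 0 := by
  by_contra! h
  have hsyz : ∀ a ∈ LinearSyzygies F, ∀ i, syzygyComponent F a i = 0 := by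
    intro a ha i
    have hsum := sum_X_mul_syzygyComponent ha
    rw [Fin.sum_univ_two, h a ha, mul_zero, zero_add] at hsum
    fin_cases i
    · exact h a ha
    · exact (mul_eq_zero.mp hsum).resolve_left (X_ne_zero 1)
  obtain ⟨i, hi⟩ := hbpf ![1, 0] (by simp)
  obtain ⟨w, hw, hiw⟩ := (hdeg i).exists_eval_eq_zero two_ne_zero
  obtain ⟨j, hjw⟩ := hbpf w hw
  have := congrArg (eval w) (eval_smul_comm_of_satisfiesK hK hsyz ![1, 0] i j)
  rw [smul_eval, smul_eval, hiw, mul_zero] at this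
  exact (mul_eq_zero.mp this).elim hi hjw

end BinaryQuadrics

theorem stmt0 {m : ℕ} (F : Fin m → MvPolynomial (Fin 2) ℂ)
    (hdeg : ∀ i, (F i).IsHomogeneous 2)
    (hbpf : ∀ z : Fin 2 → ℂ, z ≠ 0 → ∃ i, MvPolynomial.eval z (F i) ≠ 0)
    (hK : SatisfiesK F) :
    ∀ G : MvPolynomial (Fin 2) ℂ, G.IsHomogeneous 2 →
      G ∈ Submodule.span ℂ (Set.range F) := by
  intro G hG
  obtain ⟨a, ha, hA⟩ := exists_syzygyComponent_ne_zero hdeg hbpf hK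
  exact homogeneousSubmodule_two_le_span_of_syzygyComponent_ne_zero hdeg hbpf ha hA hG
end

section
/- Let V be a linear system of degree-d forms on ℙⁿ satisfying condition (K_d), and let M ≅ ℙᵏ ⊆ ℙⁿ be a linear subspace. Then the restriction of V to M satisfies condition (K_d). -/
/-!
Restriction to `M` is a ring homomorphism `φ` of polynomial rings that sends linear forms to
linear forms. Applied coordinatewise it is `φ`-semilinear, hence maps the span of the linear
syzygies of the `F i` into the span of the linear syzygies of the `φ (F i)`, and it maps each
Koszul relation of the `F i` to the corresponding Koszul relation of the `φ (F i)`.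
-/

open MvPolynomial

/-- Restriction of a form on `ℙⁿ` to the linear subspace `ℙᵏ` parametrized by the
matrix `A`, i.e. substitution `zⱼ ↦ ∑_b A j b · w_b`. -/
noncomputable def restrictTo {n k : ℕ} (A : Matrix (Fin n) (Fin k) ℂ)
    (F : MvPolynomial (Fin n) ℂ) : MvPolynomial (Fin k) ℂ :=
  MvPolynomial.aeval (fun j => ∑ b, MvPolynomial.C (A j b) * MvPolynomial.X b) F

def RingHom.compLeftₛₗ {R S : Type*} [Semiring R] [Semiring S] (φ : R →+* S) (ι : Type*) :
    (ι → R) →ₛₗ[φ] (ι → S) where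
  toFun v := φ ∘ v
  map_add' _ _ := funext fun _ => map_add φ _ _
  map_smul' _ _ := funext fun _ => map_mul φ _ _

@[simp]
lemma RingHom.compLeftₛₗ_apply {R S : Type*} [Semiring R] [Semiring S] (φ : R →+* S)
    {ι : Type*} (v : ι → R) : φ.compLeftₛₗ ι v = φ ∘ v :=
  rfl

section LinearSyzygies

variable {m n k : ℕ} (φ : MvPolynomial (Fin n) ℂ →+* MvPolynomial (Fin k) ℂ)
  (hφ : ∀ p : MvPolynomial (Fin n) ℂ, p.IsHomogeneous 1 → (φ p).IsHomogeneous 1)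
include hφ

lemma LinearSyzygies.comp_mem {F : Fin m → MvPolynomial (Fin n) ℂ}
    {a : Fin m → MvPolynomial (Fin n) ℂ} (ha : a ∈ LinearSyzygies F) :
    φ ∘ a ∈ LinearSyzygies (φ ∘ F) := by
  obtain ⟨ha_lin, ha_syz⟩ := ha
  refine ⟨fun i => hφ _ (ha_lin i), ?_⟩
  simpa only [Function.comp_apply, map_sum, map_mul, map_zero] using congrArg φ ha_syz

theorem SatisfiesK.comp {F : Fin m → MvPolynomial (Fin n) ℂ} (hK : SatisfiesK F) :
    SatisfiesK (φ ∘ F) := by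
  intro i j
  have hspan := Submodule.image_span_subset_span (φ.compLeftₛₗ (Fin m)) _ ⟨_, hK i j, rfl⟩
  have hkoszul : φ.compLeftₛₗ (Fin m) (Pi.single i (F j) - Pi.single j (F i)) =
      Pi.single i (φ (F j)) - Pi.single j (φ (F i)) := by
    ext r
    simp [Pi.apply_single (fun _ => φ) (fun _ => map_zero φ)]
  rw [hkoszul] at hspan
  refine Submodule.span_mono ?_ hspan
  rintro _ ⟨a, ha, rfl⟩
  exact LinearSyzygies.comp_mem φ hφ ha

end LinearSyzygies

lemma MvPolynomial.IsHomogeneous.restrictTo {n k : ℕ} (A : Matrix (Fin n) (Fin k) ℂ)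
    {F : MvPolynomial (Fin n) ℂ} {d : ℕ} (hF : F.IsHomogeneous d) :
    (restrictTo A F).IsHomogeneous d := by
  have hlin (j : Fin n) : (∑ b, C (A j b) * X b : MvPolynomial (Fin k) ℂ).IsHomogeneous 1 :=
    IsHomogeneous.sum _ _ _ fun b _ => by simpa using isHomogeneous_C_mul_X_pow (A j b) b 1
  rw [← one_mul d]
  exact hF.aeval _ hlin

theorem stmt3_general {m n k : ℕ} (F : Fin m → MvPolynomial (Fin (n + 1)) ℂ)
    (hK : SatisfiesK F)
    (A : Matrix (Fin (n + 1)) (Fin (k + 1)) ℂ) :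
    SatisfiesK (fun i => restrictTo A (F i)) :=
  hK.comp (aeval fun j => ∑ b, C (A j b) * X b).toRingHom fun _ hp => hp.restrictTo A

theorem stmt3 {m n k : ℕ} (d : ℕ) (F : Fin m → MvPolynomial (Fin (n + 1)) ℂ)
    (hdeg : ∀ i, (F i).IsHomogeneous d)
    (hK : SatisfiesK F)
    (A : Matrix (Fin (n + 1)) (Fin (k + 1)) ℂ)
    (hA : Function.Injective A.mulVec) :
    SatisfiesK (fun i => restrictTo A (F i)) :=
  stmt3_general F hK A
end
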